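/- Fix w ∈ Sₙ, let v ↦ v' be the greedy operation associated to w, and let v ∈ Sₙ satisfy v' = w. Then for every (a,b) ∈ Ref(w) one has v⁻¹(a) < v⁻¹(b), i.e. a appears before b in the one-line notation of v. Consequently C(v) ⊆ {x ∈ ℝⁿ : x_b ≥ x_a for all (a,b) ∈ Ref(w)}. -/

import Mathlib

/-! A pair `(a, b) ∈ Ref(w)` is an inversion `a = w i > w j = b` with `i < j`, because swapping
two entries that are in increasing order strictly increases the number of inversions. If the
greedy operation builds `w` from `v`, then at step `i` the position of `b` in `v` is still free
and admissible, since trading `w i` for the smaller `w j` keeps the chosen prefix dominated by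
`{w 0, …, w i}`; minimality of the greedy choice puts `a` before `b` in `v`. -/

namespace SchubertToric

open Equiv

/-- The number of inversions (= the length `ℓ`) of a permutation. -/
def invCount {n : ℕ} (w : Equiv.Perm (Fin n)) : ℕ :=
  ((Finset.univ : Finset (Fin n × Fin n)).filter fun p => p.1 < p.2 ∧ w p.2 < w p.1).card

/-- `initSeg w d` is the set `{w(1), …, w(d)}` (0-indexed: images of the first `d` indices). -/
def initSeg {n : ℕ} (w : Equiv.Perm (Fin n)) (d : ℕ) : Finset (Fin n) :=
  (Finset.univ.filter fun i : Fin n => (i : ℕ) < d).image w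

/-- `domLE S T`: the increasing rearrangement of `S` is componentwise ≤ that of `T`. -/
def domLE {n : ℕ} (S T : Finset (Fin n)) : Prop :=
  List.Forall₂ (· ≤ ·) (S.sort (· ≤ ·)) (T.sort (· ≤ ·))

/-- Bruhat order on `
Sₙ`, via the tableau criterion. -/
def bruhatLE {n : ℕ} (v w : Equiv.Perm (Fin n)) : Prop :=
  ∀ d : ℕ, domLE (initSeg v d) (initSeg w d)

/-- `GreedyRel w v vp` says that `vp = v'`, the result of the greedy operation associated
to `w`: there is a sequence of indices `idx 0, idx 1, …`, each chosen as the *least* index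
not previously chosen such that the increasing rearrangement of the previously chosen values
together with the new value is componentwise at most `{w(1),…,w(d)}`, and `vp d = v (idx d)`. -/
def GreedyRel {n : ℕ} (w v vp : Equiv.Perm (Fin n)) : Prop :=
  ∃ idx : Fin n → Fin n,
    (∀ d : Fin n, vp d = v (idx d)) ∧
    ∀ d : Fin n,
      IsLeast {i : Fin n |
        (∀ e : Fin n, e < d → idx e ≠ i) ∧
        domLE (insert (v i)
            ((Finset.univ.filter fun e : Fin n => e < d).image fun e => v (idx e)))
          (initSeg w ((d : ℕ) + 1))}
        (idx d)

/-- Right weak order: `rightWeakLE u v` iff `v = u·s_{i₁}⋯s_{i_k}` with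
`ℓ(u·s_{i₁}⋯s_{i_j}) = ℓ(u) + j` for all `0 ≤ j ≤ k`. -/
def rightWeakLE {n : ℕ} (u v : Equiv.Perm (Fin n)) : Prop :=
  ∃ L : List (Equiv.Perm (Fin n)),
    (∀ s ∈ L, ∃ (i : Fin n) (h : (i : ℕ) + 1 < n), s = Equiv.swap i ⟨(i : ℕ) + 1, h⟩) ∧
    v = u * L.prod ∧
    ∀ k ≤ L.length, invCount (u * (L.take k).prod) = invCount u + k

/-- `Ref(w) = {(w(i),w(j)) : i < j, ℓ(w) − ℓ(t_{w(i),w(j)}·w) = 1}`. -/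
def RefSet {n : ℕ} (w : Equiv.Perm (Fin n)) : Set (Fin n × Fin n) :=
  {p | ∃ i j : Fin n, i < j ∧ p = (w i, w j) ∧
    invCount (Equiv.swap (w i) (w j) * w) + 1 = invCount w}

/-- The (undirected) graph `Γ_w` on `Fin n` whose edges are the pairs in `Ref(w)`. -/
def refGraph {n : ℕ} (w : Equiv.Perm (Fin n)) : SimpleGraph (Fin n) :=
  SimpleGraph.fromRel fun a b => (a, b) ∈ RefSet w

/-- The vertices of `Γ_w`: the integers occurring in pairs of `Ref(w)`. -/
def refVerts {n : ℕ} (w : Equiv.Perm (Fin n)) : Set (Fin n) :=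
  {a | ∃ b, (a, b) ∈ RefSet w ∨ (b, a) ∈ RefSet w}

/-- The cone `C(v) = {x ∈ ℝⁿ : x_{v(1)} ≤ x_{v(2)} ≤ ⋯ ≤ x_{v(n)}}`. -/
def coneC {n : ℕ} (v : Equiv.Perm (Fin n)) : Set (Fin n → ℝ) :=
  {x | ∀ i j : Fin n, i ≤ j → x (v i) ≤ x (v j)}

/-- `Ẽ_w(u) = {(u(i),u(j)) : i < j, t_{u(i),u(j)}·u ≤ w, |ℓ(u) − ℓ(t_{u(i),u(j)}·u)| = 1}`. -/
def Etil {n : ℕ} (w u : Equiv.Perm (Fin n)) : Set (Fin n × Fin n) :=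
  {p | ∃ i j : Fin n, i < j ∧ p = (u i, u j) ∧
    bruhatLE (Equiv.swap (u i) (u j) * u) w ∧
    (invCount (Equiv.swap (u i) (u j) * u) + 1 = invCount u ∨
      invCount u + 1 = invCount (Equiv.swap (u i) (u j) * u))}

/-- An element `p = (a,b)` of `Ẽ_w(u)` is decomposable if it is a sum (under
`(a,b)+(b,c) = (a,c)`) of two or more other elements of `Ẽ_w(u)`. -/
def Decomposable {n : ℕ} (w u : Equiv.Perm (Fin n)) (p : Fin n × Fin n) : Prop :=
  ∃ (m : ℕ) (c : ℕ → Fin n), 2 ≤ m ∧ c 0 = p.1 ∧ c m = p.2 ∧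
    ∀ i < m, (c i, c (i + 1)) ∈ Etil w u ∧ (c i, c (i + 1)) ≠ p

/-- `E_w(u)`: the indecomposable elements of `Ẽ_w(u)`. -/
def Ew {n : ℕ} (w u : Equiv.Perm (Fin n)) : Set (Fin n × Fin n) :=
  {p | p ∈ Etil w u ∧ ¬ Decomposable w u p}

/-- The longest element `w₀ = n(n−1)⋯21` of `Sₙ`. -/
def w0 {n : ℕ} : Equiv.Perm (Fin n) :=
  Function.Involutive.toPerm Fin.rev Fin.rev_rev

end SchubertToric

section OrderedInsert

variable {α : Type*} [LinearOrder α]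

lemma List.forall₂_cons_orderedInsert {a t : α} {L : List α} (hL : L.Pairwise (· ≤ ·))
    (ha : ∀ x ∈ L, a ≤ x) (hat : a ≤ t) :
    List.Forall₂ (· ≤ ·) (a :: L) (L.orderedInsert (· ≤ ·) t) := by
  induction L generalizing a with
  | nil => simpa using hat
  | cons b L ih =>
    rw [List.pairwise_cons] at hL
    by_cases htb : t ≤ b
    · simp only [List.orderedInsert, if_pos htb]
      exact .cons hat (List.forall₂_refl _)
    · simp only [List.orderedInsert, if_neg htb]
      exact .cons (ha b (by simp)) (ih hL.2 hL.1 (le_of_not_ge htb))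

lemma List.forall₂_orderedInsert_of_le {s t : α} (hst : s ≤ t) {L : List α}
    (hL : L.Pairwise (· ≤ ·)) :
    List.Forall₂ (· ≤ ·) (L.orderedInsert (· ≤ ·) s) (L.orderedInsert (· ≤ ·) t) := by
  induction L with
  | nil => simpa using hst
  | cons a L ih =>
    rw [List.pairwise_cons] at hL
    by_cases hsa : s ≤ a
    · by_cases hta : t ≤ a
      · simp only [List.orderedInsert, if_pos hsa, if_pos hta]
        exact .cons hst (List.forall₂_refl _)
      · simp only [List.orderedInsert, if_pos hsa, if_neg hta]
        exact .cons hsa (List.forall₂_cons_orderedInsert hL.2 hL.1 (le_of_not_ge hta))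
    · have hta : ¬ t ≤ a := fun h => hsa (hst.trans h)
      simp only [List.orderedInsert, if_neg hsa, if_neg hta]
      exact .cons le_rfl (ih hL.2)

lemma Finset.sort_insert_eq_orderedInsert {a : α} {S : Finset α} (ha : a ∉ S) :
    (insert a S).sort (· ≤ ·) = (S.sort (· ≤ ·)).orderedInsert (· ≤ ·) a := by
  have hperm : ((insert a S).sort (· ≤ ·)).Perm (a :: S.sort (· ≤ ·)) := by
    rw [← Multiset.coe_eq_coe, Finset.sort_eq, Finset.insert_val_of_notMem ha,
      ← Multiset.cons_coe, Finset.sort_eq]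
  exact List.Perm.eq_of_pairwise' (Finset.pairwise_sort _ _)
    ((Finset.pairwise_sort _ _).orderedInsert _ _)
    (hperm.trans (List.perm_orderedInsert _ _ _).symm)

end OrderedInsert

namespace SchubertToric

open Equiv

lemma domLE_insert_of_le {n : ℕ} {s t : Fin n} {S : Finset (Fin n)} (hs : s ∉ S) (ht : t ∉ S)
    (hst : s ≤ t) : domLE (insert s S) (insert t S) := by
  rw [domLE, Finset.sort_insert_eq_orderedInsert hs, Finset.sort_insert_eq_orderedInsert ht]
  exact List.forall₂_orderedInsert_of_le hst (Finset.pairwise_sort _ _)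

section Inversions

variable {n : ℕ}

def inversions (w : Perm (Fin n)) : Finset (Fin n × Fin n) :=
  Finset.univ.filter fun p => p.1 < p.2 ∧ w p.2 < w p.1

lemma card_inversions (w : Perm (Fin n)) : (inversions w).card = invCount w := rfl

lemma mem_inversions {w : Perm (Fin n)} {p : Fin n × Fin n} :
    p ∈ inversions w ↔ p.1 < p.2 ∧ w p.2 < w p.1 := by
  simp [inversions]

lemma invCount_lt_invCount_mul_swap {w : Perm (Fin n)} {i j : Fin n} (hij : i < j)
    (hw : w i < w j) : invCount w < invCount (w * swap i j) := by
  set u := w * swap i j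
  have hu : ∀ k, u (swap i j k) = w k := fun k => by simp [u]
  have hij_mem : (i, j) ∈ inversions u := mem_inversions.2 ⟨hij, by simpa [u] using hw⟩
  -- An inversion of `w` that is not one of `u` is moved along `swap i j`, which then keeps
  -- its two entries in order.
  let F : Fin n × Fin n → Fin n × Fin n := fun p =>
    if p ∈ inversions u then p else (swap i j p.1, swap i j p.2)
  have hmoved : ∀ p ∈ inversions w, p ∉ inversions u →
      (swap i j p.1, swap i j p.2) ∈ inversions u := by
    rintro ⟨p, q⟩ hw' hu'
    simp only [mem_inversions, hu, u, Perm.mul_apply, not_and, not_lt] at hw' hu' ⊢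
    refine ⟨?_, hw'.2⟩
    have := hu' hw'.1
    simp only [swap_apply_def] at this ⊢
    split_ifs at this ⊢ <;> grind
  have hmaps : ∀ p ∈ inversions w, F p ∈ (inversions u).erase (i, j) := by
    intro p hp
    by_cases hpu : p ∈ inversions u
    · simp only [F, if_pos hpu, Finset.mem_erase]
      refine ⟨?_, hpu⟩
      rintro rfl
      exact absurd (mem_inversions.1 hp).2 hw.not_gt
    · simp only [F, if_neg hpu, Finset.mem_erase]
      refine ⟨?_, hmoved p hp hpu⟩
      intro he
      have hp' := (mem_inversions.1 hp).1
      simp only [Prod.ext_iff, swap_apply_eq_iff, swap_apply_left, swap_apply_right] at he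
      rw [he.1, he.2] at hp'
      exact hij.not_gt hp'
  -- A kept and a moved inversion cannot collide: as `u ∘ swap i j = w`, the kept inversion of
  -- `w` would make the moved one an inversion of `u`.
  have hinj : Set.InjOn F (inversions w) := by
    rintro ⟨p, q⟩ hpq ⟨p', q'⟩ hpq' hF
    simp only [Finset.mem_coe, mem_inversions] at hpq hpq'
    simp only [F, mem_inversions, u, Perm.mul_apply] at hF
    split_ifs at hF <;> simp only [Prod.ext_iff, swap_apply_eq_iff] at hF ⊢ <;> grind
  calc invCount w = (inversions w).card := (card_inversions w).symm
    _ ≤ ((inversions u).erase (i, j)).card := Finset.card_le_card_of_injOn F hmaps hinj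
    _ < (inversions u).card := Finset.card_erase_lt_of_mem hij_mem
    _ = invCount u := card_inversions u

end Inversions

lemma exists_inversion_of_mem_refSet {n : ℕ} {w : Perm (Fin n)} {a b : Fin n}
    (hab : (a, b) ∈ RefSet w) : ∃ i j, i < j ∧ w i = a ∧ w j = b ∧ w j < w i := by
  obtain ⟨i, j, hij, hab, hlen⟩ := hab
  obtain ⟨rfl, rfl⟩ := Prod.ext_iff.1 hab
  refine ⟨i, j, hij, rfl, rfl, lt_of_le_of_ne (not_lt.1 fun hw => ?_) (w.injective.ne hij.ne')⟩
  have := invCount_lt_invCount_mul_swap hij hw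
  rw [mul_swap_eq_swap_mul] at this
  omega

section InitSeg

variable {n : ℕ}

lemma apply_mem_initSeg_iff {w : Perm (Fin n)} {k : Fin n} {d : ℕ} :
    w k ∈ initSeg w d ↔ (k : ℕ) < d := by
  simp [initSeg]

lemma initSeg_succ (w : Perm (Fin n)) (d : Fin n) :
    initSeg w ((d : ℕ) + 1) = insert (w d) (initSeg w d) := by
  ext x
  obtain ⟨k, rfl⟩ := w.surjective x
  simp only [Finset.mem_insert, apply_mem_initSeg_iff, w.injective.eq_iff, Fin.ext_iff]
  omega

end InitSeg

theorem GreedyRel.symm_apply_lt_symm_apply {n : ℕ} {w v : Perm (Fin n)} (h : GreedyRel w v w)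
    {i j : Fin n} (hij : i < j) (hw : w j < w i) : v.symm (w i) < v.symm (w j) := by
  obtain ⟨idx, hvp, hleast⟩ := h
  have hidx : ∀ d, idx d = v.symm (w d) := fun d => by rw [hvp d, symm_apply_apply]
  have hprefix : ((Finset.univ.filter fun e : Fin n => e < i).image fun e => v (idx e)) =
      initSeg w i := by
    simp only [hidx, apply_symm_apply, initSeg, Fin.lt_def]
  have hcand : v.symm (w j) ∈ {k : Fin n | (∀ e : Fin n, e < i → idx e ≠ k) ∧
      domLE (insert (v k) ((Finset.univ.filter fun e : Fin n => e < i).image fun e => v (idx e)))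
        (initSeg w ((i : ℕ) + 1))} := by
    refine ⟨fun e he => ?_, ?_⟩
    · simpa [hidx] using (he.trans hij).ne
    · rw [hprefix, apply_symm_apply, initSeg_succ]
      exact domLE_insert_of_le (apply_mem_initSeg_iff.not.2 (by simp [hij.le]))
        (apply_mem_initSeg_iff.not.2 (lt_irrefl _)) hw.le
  have hle : v.symm (w i) ≤ v.symm (w j) := hidx i ▸ (hleast i).2 hcand
  exact lt_of_le_of_ne hle (by simpa using hij.ne)

/-- If `v' = w`, then for every `(a,b) ∈ Ref(w)` the value `a` appears before
`b` in the one-line notation of `v`; consequently `C(v) ⊆ {x : x_b ≥ x_a ∀ (a,b) ∈ Ref(w)}`. -/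
theorem cone_subset_of_greedy_eq {n : ℕ} (w v : Equiv.Perm (Fin n))
    (h : GreedyRel w v w) :
    (∀ a b : Fin n, (a, b) ∈ RefSet w → v.symm a < v.symm b) ∧
    (∀ x ∈ coneC v, ∀ a b : Fin n, (a, b) ∈ RefSet w → x a ≤ x b) := by
  have hprec : ∀ a b : Fin n, (a, b) ∈ RefSet w → v.symm a < v.symm b := by
    intro a b hab
    obtain ⟨i, j, hij, rfl, rfl, hw⟩ := exists_inversion_of_mem_refSet hab
    exact h.symm_apply_lt_symm_apply hij hw
  refine ⟨hprec, fun x hx a b hab => ?_⟩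
  simpa using hx _ _ (hprec a b hab).le

end SchubertToric
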